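/- Let x_1,...,x_n be distinct real numbers and define the Vandermonde-type matrix M with (i,j) entry (-1)^{j-1} x_i^{n-j}/ω'(x_i), where ω(x) = ∏_{i=1}^n (x - x_i). Then M is invertible and its inverse is the matrix of partial derivatives of elementary symmetric polynomials, [∂c_i/∂x_j]_{i,j=1}^n. -/

import Mathlib

/-!
Row `i` of `M` times column `k` of `J` is
`∑ⱼ (-1)ʲ xᵢ^(n-1-j) eⱼ(x₁, …, x̂ₖ, …, xₙ) / ω'(xᵢ)`, because `∂c_{j+1}/∂xₖ` is the `j`-th
elementary symmetric polynomial in the variables other than `xₖ`. By Vieta's formulas the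
numerator is `∏_{ℓ ≠ k} (xᵢ - x_ℓ)`, which vanishes for `i ≠ k` and is `ω'(xᵢ)` for `i = k`.
Hence `M * J = 1`.
-/

open Polynomial Finset

namespace MvPolynomial

variable {R σ : Type*} [CommSemiring R] [DecidableEq σ]

theorem pderiv_prod_X (j : σ) (t : Finset σ) :
    pderiv j (∏ i ∈ t, X i : MvPolynomial σ R) =
      if j ∈ t then ∏ i ∈ t.erase j, X i else 0 := by
  induction t using Finset.induction with
  | empty => simp
  | @insert a t ha ih =>
    rw [prod_insert ha, Derivation.leibniz, ih, pderiv_X]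
    by_cases hj : j = a
    · subst hj
      simp [ha]
    · have ha' : a ∉ t.erase j := fun h => ha (mem_of_mem_erase h)
      by_cases ht : j ∈ t <;>
        simp [ht, hj, erase_insert_of_ne (Ne.symm hj), prod_insert ha']

theorem pderiv_esymm_succ [Fintype σ] (k : σ) (m : ℕ) :
    pderiv k (esymm σ R (m + 1)) = ∑ t ∈ (univ.erase k).powersetCard m, ∏ i ∈ t, X i := by
  have hk : ∀ j, ∀ t ∈ (univ.erase k).powersetCard j, k ∉ t := fun j t ht h =>
    notMem_erase k univ ((mem_powersetCard.1 ht).1 h)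
  -- split the `(m + 1)`-subsets according to whether they contain `k`
  conv_lhs => rw [esymm, map_sum, ← insert_erase (mem_univ k),
    powersetCard_succ_insert (notMem_erase k univ)]
  rw [sum_union, sum_image, sum_eq_zero fun t ht => ?_, zero_add]
  · refine sum_congr rfl fun t ht => ?_
    rw [pderiv_prod_X, if_pos (mem_insert_self k t), erase_insert (hk m t ht)]
  · rw [pderiv_prod_X, if_neg (hk _ t ht)]
  · intro t ht u hu h
    simpa [erase_insert (hk m t ht), erase_insert (hk m u hu)] using congr_arg (erase · k) h
  · rw [disjoint_right]
    rintro _ ht hu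
    obtain ⟨t, -, rfl⟩ := mem_image.1 ht
    exact hk _ _ hu (mem_insert_self k t)

theorem eval_pderiv_esymm_succ [Fintype σ] (x : σ → R) (k : σ) (m : ℕ) :
    eval x (pderiv k (esymm σ R (m + 1))) = ((univ.erase k).val.map x).esymm m := by
  rw [pderiv_esymm_succ, esymm_map_val]
  simp only [map_sum, map_prod, eval_X]

end MvPolynomial

theorem Finset.prod_sub_eq_sum_esymm {R ι : Type*} [CommRing R] (a : R) (s : Finset ι)
    (x : ι → R) :
    ∏ i ∈ s, (a - x i) =
      ∑ j ∈ range (#s + 1), (-1) ^ j * a ^ (#s - j) * (s.val.map x).esymm j := by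
  have := congr_arg (eval a) (Multiset.prod_X_sub_X_eq_sum_esymm (s.val.map x))
  simp only [Multiset.map_map, Function.comp_def, eval_multiset_prod, eval_finsetSum, eval_mul,
    eval_pow, eval_neg, eval_one, eval_C, eval_X, eval_sub, Multiset.card_map, card_val] at this
  rw [prod_eq_multiset_prod, this]
  exact sum_congr rfl fun j _ => by ring

theorem prod_erase_sub_div_prod_erase_sub {K ι : Type*} [Field K] [Fintype ι] [DecidableEq ι]
    {x : ι → K} (hx : Function.Injective x) (i k : ι) :
    (∏ l ∈ univ.erase k, (x i - x l)) / ∏ l ∈ univ.erase i, (x i - x l) =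
      if i = k then 1 else 0 := by
  split_ifs with hik
  · subst hik
    refine div_self (prod_ne_zero_iff.2 fun l hl => sub_ne_zero.2 fun h => ?_)
    exact ne_of_mem_erase hl (hx h).symm
  · rw [prod_eq_zero (mem_erase.2 ⟨hik, mem_univ i⟩) (sub_self _), zero_div]

theorem inv_of_vandermonde_type_matrix (n : ℕ) (x : Fin n → ℝ)
    (hx : Function.Injective x) :
    let ω : Polynomial ℝ := ∏ i : Fin n, (X - C (x i))
    let M : Matrix (Fin n) (Fin n) ℝ := fun i j =>
      (-1 : ℝ) ^ (j.val) * x i ^ (n - 1 - j.val) / (derivative ω).eval (x i)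
    let J : Matrix (Fin n) (Fin n) ℝ := fun i j =>
      MvPolynomial.eval x (MvPolynomial.pderiv j (MvPolynomial.esymm (Fin n) ℝ (i.val + 1)))
    IsUnit M ∧ M⁻¹ = J := by
  intro ω M J
  have hω (i : Fin n) : (derivative ω).eval (x i) = ∏ l ∈ univ.erase i, (x i - x l) := by
    -- `ω` is `Lagrange.nodal univ x` by definition
    rw [← Lagrange.eval_nodal, ← Lagrange.eval_nodal_derivative_eval_node_eq (mem_univ i)]
    rfl
  have hMJ : M * J = 1 := by
    ext i k
    have hcard : #(univ.erase k) = n - 1 := by simp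
    calc (M * J) i k
        = (∑ j ∈ range n, (-1) ^ j * x i ^ (n - 1 - j) * ((univ.erase k).val.map x).esymm j) /
            ∏ l ∈ univ.erase i, (x i - x l) := by
          rw [Matrix.mul_apply]
          simp only [M, J, MvPolynomial.eval_pderiv_esymm_succ, hω, div_mul_eq_mul_div, ← sum_div]
          rw [Fin.sum_univ_eq_sum_range (fun j => (-1) ^ j * x i ^ (n - 1 - j) *
            ((univ.erase k).val.map x).esymm j)]
      _ = (∏ l ∈ univ.erase k, (x i - x l)) / ∏ l ∈ univ.erase i, (x i - x l) := by
          rw [prod_sub_eq_sum_esymm (x i) (univ.erase k), hcard, Nat.sub_add_cancel k.pos]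
      _ = (1 : Matrix (Fin n) (Fin n) ℝ) i k := by
          rw [prod_erase_sub_div_prod_erase_sub hx, Matrix.one_apply]
  exact ⟨(Matrix.isUnit_iff_isUnit_det M).2 (Matrix.isUnit_det_of_right_inverse hMJ),
    Matrix.inv_eq_right_inv hMJ⟩
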